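/- Let D ⊂ ℂ^n be a hyperconvex domain and Φ_{𝒫,max}^D a global Zhou weight related to the priori datum 𝒫 = ({z_i}_{i=1}^p, {f_{0,i}}_{i=1}^p, {u_{0,i}}_{i=1}^p) on D. Then for every z ∈ D, Φ_{𝒫,max}^D(z) = sup{ φ(z) : φ ∈ PSH⁻(D), (f_{0,i},z_i) ∉ 𝓘(u_{0,i}+φ)_{z_i}, and φ ≥ Φ_{𝒫,max}^D + O(1) near z_i for all i = 1,…,p }. -/

import Mathlib

open Metric MeasureTheory Filter Topology Set
open scoped ENNReal Classical

noncomputable section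

/-- `ℂⁿ`. -/
abbrev Cn (n : ℕ) : Type := Fin n → ℂ

/-- The exponential function on the extended reals, with values in `ℝ≥0∞`
(`exp (-∞) = 0`, `exp (+∞) = ∞`). -/
noncomputable def expE (x : EReal) : ℝ≥0∞ :=
  if x = ⊤ then ⊤ else if x = ⊥ then 0 else ENNReal.ofReal (Real.exp x.toReal)

/-- The logarithm of a nonnegative real number, with values in `EReal`
(`elog 0 = -∞`). -/
noncomputable def elog (x : ℝ) : EReal := if x ≤ 0 then ⊥ else ((Real.log x : ℝ) : EReal)

section PSH

variable {F : Type*} [NormedAddCommGroup F] [NormedSpace ℂ F]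

/-- On every closed complex disc contained in `D`, `u` lies below every harmonic function
(i.e. every real part of a holomorphic function) dominating it on the boundary circle.
This is the sub-mean-value property of subharmonicity along complex lines. -/
def SubMeanOnLines (u : F → EReal) (D : Set F) : Prop :=
  ∀ a b : F, ∀ r : ℝ, 0 < r →
    (∀ l : ℂ, ‖l‖ ≤ r → a + l • b ∈ D) →
    ∀ h : ℂ → ℂ, DifferentiableOn ℂ h (Metric.closedBall 0 r) →
      (∀ l : ℂ, ‖l‖ = r → u (a + l • b) ≤ ((h l).re : EReal)) →
      ∀ l : ℂ, ‖l‖ ≤ r → u (a + l • b) ≤ ((h l).re : EReal)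

/-- `u : F → [-∞, ∞)` is plurisubharmonic on `D`: upper semicontinuous and subharmonic
along every complex line. -/
def PlurisubharmonicOn (u : F → EReal) (D : Set F) : Prop :=
  UpperSemicontinuousOn u D ∧ (∀ z ∈ D, u z < ⊤) ∧ SubMeanOnLines u D

/-- `u ∈ PSH⁻(D)`: `u` is a nonpositive (negative) plurisubharmonic function on `D`. -/
def NegPSHOn (u : F → EReal) (D : Set F) : Prop :=
  PlurisubharmonicOn u D ∧ ∀ z ∈ D, u z ≤ 0

/-- `f ≥ g + O(1)` near `z₀`. -/
def GeO1Near (f g : F → EReal) (z₀ : F) : Prop :=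
  ∃ r > (0:ℝ), ∃ C : ℝ, ∀ w ∈ Metric.ball z₀ r, g w ≤ f w + (C : EReal)

/-- `f = g + O(1)` near `z₀`. -/
def EqO1Near (f g : F → EReal) (z₀ : F) : Prop :=
  GeO1Near f g z₀ ∧ GeO1Near g f z₀

/-- The relative type `σ_{z₀}(ψ, φ) = sup{c ≥ 0 : ψ ≤ cφ + O(1) near z₀}`. -/
noncomputable def relType (ψ φ : F → EReal) (z₀ : F) : ℝ :=
  sSup {c : ℝ | 0 ≤ c ∧ ∃ r > (0:ℝ), ∃ C : ℝ,
    ∀ w ∈ Metric.ball z₀ r, ψ w ≤ (c : EReal) * φ w + (C : EReal)}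

/-- `σ_{z₀}(ψ, φ) ≥ c`, expressed without reference to a (possibly infinite) supremum:
every `c' ∈ [0, c)` is an admissible constant. -/
def relTypeGE (ψ φ : F → EReal) (z₀ : F) (c : ℝ) : Prop :=
  ∀ c' : ℝ, 0 ≤ c' → c' < c → ∃ r > (0:ℝ), ∃ C : ℝ,
    ∀ w ∈ Metric.ball z₀ r, ψ w ≤ (c' : EReal) * φ w + (C : EReal)

/-- `(dd^c φ)ⁿ = 0` on the open set `Ω`, encoded through the equivalent maximality
property: any plurisubharmonic `u` on `Ω` with `u ≤ φ` outside a compact subset of `Ω`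
satisfies `u ≤ φ` on all of `Ω`. -/
def MongeAmpereVanishesOn (φ : F → EReal) (Ω : Set F) : Prop :=
  ∀ u : F → EReal, PlurisubharmonicOn u Ω →
    ∀ K : Set F, IsCompact K → K ⊆ Ω →
      (∀ z ∈ Ω \ K, u z ≤ φ z) → ∀ z ∈ Ω, u z ≤ φ z

/-- `S` is an analytic subset of `D`: locally the common zero set of finitely many
holomorphic functions. -/
def IsAnalyticSubset (D S : Set F) : Prop :=
  S ⊆ D ∧ ∀ z ∈ D, ∃ r > (0:ℝ), Metric.ball z r ⊆ D ∧ ∃ m : ℕ, ∃ g : Fin m → F → ℂ,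
    (∀ j, DifferentiableOn ℂ (g j) (Metric.ball z r)) ∧
    S ∩ Metric.ball z r = {w ∈ Metric.ball z r | ∀ j, g j w = 0}

end PSH

/-- A hyperconvex domain: an open connected nonempty set admitting a continuous negative
plurisubharmonic exhaustion function. -/
def IsHyperconvex {n : ℕ} (D : Set (Cn n)) : Prop :=
  IsOpen D ∧ D.Nonempty ∧ IsPreconnected D ∧
  ∃ ρ : Cn n → ℝ, ContinuousOn ρ D ∧
    PlurisubharmonicOn (fun z => ((ρ z : ℝ) : EReal)) D ∧
    (∀ z ∈ D, ρ z < 0) ∧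
    ∀ c : ℝ, c < 0 → ∃ K : Set (Cn n), IsCompact K ∧ K ⊆ D ∧ {z ∈ D | ρ z ≤ c} ⊆ K

/-- Defining data for a bounded strictly hyperconvex domain `D`: a bounded domain `Ω` and
a continuous plurisubharmonic exhaustion `ρ : Ω → (-∞, 1)` with `D = {ρ < 0}` and all
sublevel sets `{ρ < c}`, `c ∈ [0,1]`, connected. -/
structure StrictHyperconvexData (n : ℕ) (D : Set (Cn n)) where
  Ω : Set (Cn n)
  Ω_open : IsOpen Ω
  Ω_conn : IsConnected Ω
  Ω_bdd : Bornology.IsBounded Ω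
  ρ : Cn n → ℝ
  ρ_cont : ContinuousOn ρ Ω
  ρ_psh : PlurisubharmonicOn (fun z => ((ρ z : ℝ) : EReal)) Ω
  ρ_lt_one : ∀ z ∈ Ω, ρ z < 1
  ρ_exhaust : ∀ c : ℝ, c < 1 → ∃ K : Set (Cn n), IsCompact K ∧ K ⊆ Ω ∧ {z ∈ Ω | ρ z ≤ c} ⊆ K
  D_eq : D = {z ∈ Ω | ρ z < 0}
  lvl_conn : ∀ c : ℝ, 0 ≤ c → c ≤ 1 → IsConnected {z ∈ Ω | ρ z < c}

/-- A pseudoconvex domain: an open nonempty set admitting a continuous plurisubharmonic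
exhaustion function. -/
def IsPseudoconvex {n : ℕ} (Ω : Set (Cn n)) : Prop :=
  IsOpen Ω ∧ Ω.Nonempty ∧
  ∃ ρ : Cn n → ℝ, ContinuousOn ρ Ω ∧
    PlurisubharmonicOn (fun z => ((ρ z : ℝ) : EReal)) Ω ∧
    ∀ c : ℝ, ∃ K : Set (Cn n), IsCompact K ∧ K ⊆ Ω ∧ {z ∈ Ω | ρ z ≤ c} ⊆ K

/-- `g` is (Lebesgue) integrable in some neighborhood of `z₀`. -/
def IntegrableNear {n : ℕ} (g : Cn n → ℝ≥0∞) (z₀ : Cn n) : Prop :=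
  ∃ r > (0:ℝ), (∫⁻ w in Metric.ball z₀ r, g w) < ⊤

/-- The density `|f|² e^{-2u}` associated to a vector `f` of holomorphic functions and a
weight `u`. -/
noncomputable def densFn {n k : ℕ} (f : Fin k → Cn n → ℂ) (u : Cn n → EReal) (w : Cn n) :
    ℝ≥0∞ :=
  (∑ j, ((‖f j w‖₊ : ℝ≥0∞)) ^ 2) * expE ((-2 : EReal) * u w)

/-- `(f, z₀) ∈ 𝓘(u)_{z₀}`: the germ of `f` belongs to the multiplier ideal of `u` at
`z₀`, i.e. `|f|² e^{-2u}` is integrable near `z₀`. -/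
def MemIdeal {n : ℕ} (f : Cn n → ℂ) (u : Cn n → EReal) (z₀ : Cn n) : Prop :=
  IntegrableNear (fun w => ((‖f w‖₊ : ℝ≥0∞)) ^ 2 * expE ((-2 : EReal) * u w)) z₀

/-- `(f, z₀) ∉ 𝓘(u + g)_{z₀}`: `|f|² e^{-2u} e^{-2g}` is not integrable near `z₀`. -/
def NotInIdeal {n k : ℕ} (f : Fin k → Cn n → ℂ) (u g : Cn n → EReal) (z₀ : Cn n) : Prop :=
  ¬ IntegrableNear (fun w => densFn f u w * expE ((-2 : EReal) * g w)) z₀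

/-- A priori datum `𝒫 = ({z_i}, {f_{0,i}}, {u_{0,i}})`: distinct points `z_i`, vectors
`f_{0,i}` of holomorphic functions near `z_i`, and plurisubharmonic weights `u_{0,i}`
near `z_i` such that each `|f_{0,i}|² e^{-2u_{0,i}}` is integrable near `z_i`. -/
structure PrioriDatum (n p : ℕ) where
  z : Fin p → Cn n
  z_inj : Function.Injective z
  k : Fin p → ℕ
  f : (i : Fin p) → Fin (k i) → Cn n → ℂ
  u : Fin p → Cn n → EReal
  rad : Fin p → ℝ
  rad_pos : ∀ i, 0 < rad i
  f_holo : ∀ i j, DifferentiableOn ℂ (f i j) (Metric.ball (z i) (rad i))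
  u_psh : ∀ i, PlurisubharmonicOn (u i) (Metric.ball (z i) (rad i))
  u_int : ∀ i, IntegrableNear (densFn (f i) (u i)) (z i)

/-- `Φ` is a (multipoled) global Zhou weight related to the datum `P` on the domain `G`. -/
def IsGlobalZhouWeight {n p : ℕ} (G : Set (Cn n)) (P : PrioriDatum n p)
    (Φ : Cn n → EReal) : Prop :=
  NegPSHOn Φ G ∧
  (∃ N₀ : ℝ, 0 < N₀ ∧ ∀ N : Fin p → ℝ, (∀ i, N₀ ≤ N i) → ∀ i,
    IntegrableNear (fun w => densFn (P.f i) (P.u i) w *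
      ENNReal.ofReal (‖w - P.z i‖ ^ (2 * N i)) * expE ((-2 : EReal) * Φ w)) (P.z i)) ∧
  (∀ i, NotInIdeal (P.f i) (P.u i) Φ (P.z i)) ∧
  (∀ Ψ : Cn n → EReal, NegPSHOn Ψ G → (∀ z ∈ G, Φ z ≤ Ψ z) →
    (∀ i, NotInIdeal (P.f i) (P.u i) Ψ (P.z i)) → ∀ z ∈ G, Ψ z = Φ z)

/-- `φ` is a local Zhou weight related to `|f|² e^{-2u}` near `z₀`. -/
def IsLocalZhouWeight {n : ℕ} (z₀ : Cn n) {k : ℕ} (f : Fin k → Cn n → ℂ)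
    (u : Cn n → EReal) (φ : Cn n → EReal) : Prop :=
  (∃ r > (0:ℝ), PlurisubharmonicOn φ (Metric.ball z₀ r)) ∧
  (∃ N₀ : ℝ, 0 < N₀ ∧ ∀ N : ℝ, N₀ ≤ N →
    IntegrableNear (fun w => densFn f u w *
      ENNReal.ofReal (‖w - z₀‖ ^ (2 * N)) * expE ((-2 : EReal) * φ w)) z₀) ∧
  NotInIdeal f u φ z₀ ∧
  (∀ φ' : Cn n → EReal, (∃ r > (0:ℝ), PlurisubharmonicOn φ' (Metric.ball z₀ r)) →
    GeO1Near φ' φ z₀ → NotInIdeal f u φ' z₀ → EqO1Near φ' φ z₀)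

/-- The upper envelope of all negative plurisubharmonic functions `g` on `D` with
`(f_{0,i}, z_i) ∉ 𝓘(u_{0,i} + g)_{z_i}` and `g ≥ φ_i + O(1)` near every pole `z_i`. -/
noncomputable def zhouSup {n p : ℕ} (D : Set (Cn n)) (P : PrioriDatum n p)
    (φ : Fin p → Cn n → EReal) (x : Cn n) : EReal :=
  sSup {v : EReal | ∃ g : Cn n → EReal,
    (NegPSHOn g D ∧ (∀ i, NotInIdeal (P.f i) (P.u i) g (P.z i)) ∧
      ∀ i, GeO1Near g (φ i) (P.z i)) ∧ v = g x}

/-- The multipoled pluricomplex Green function `G_{D,(z_1,…,z_p)}`. -/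
noncomputable def greenMulti {n p : ℕ} (D : Set (Cn n)) (z : Fin p → Cn n) (x : Cn n) :
    EReal :=
  sSup {v : EReal | ∃ g : Cn n → EReal,
    (NegPSHOn g D ∧ ∀ i, ∃ r > (0:ℝ), ∃ C : ℝ,
      ∀ w ∈ Metric.ball (z i) r, g w ≤ elog ‖w - z i‖ + (C : EReal)) ∧ v = g x}

/-- Extension of a function on `D` by `0` outside `D` (in particular on `∂D`). -/
noncomputable def extZero {n : ℕ} (D : Set (Cn n)) (Φ : Cn n → EReal) (x : Cn n) : EReal :=
  if x ∈ D then Φ x else 0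

/-- Local datum near the origin: a vector `f` of holomorphic functions near `0` and a
plurisubharmonic weight `u` near `0` with `|f|² e^{-2u}` integrable near `0`. -/
structure LocalDatum (n : ℕ) where
  k : ℕ
  f : Fin k → Cn n → ℂ
  u : Cn n → EReal
  rad : ℝ
  rad_pos : 0 < rad
  f_holo : ∀ j, DifferentiableOn ℂ (f j) (Metric.ball 0 rad)
  u_psh : PlurisubharmonicOn u (Metric.ball 0 rad)
  u_int : IntegrableNear (densFn f u) 0

/-- The multipoled global Zhou weight `Φ_{Z,max}^D` attached to translated local data:
the upper envelope of negative plurisubharmonic `g` on `D` with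
`(τ_{z_i} f_{0,i}, z_i) ∉ 𝓘(τ_{z_i} u_{0,i} + g)_{z_i}` and
`g ≥ τ_{z_i} φ_i + O(1)` near each `z_i`. -/
noncomputable def zhouSupTrans {n p : ℕ} (D : Set (Cn n)) (L : Fin p → LocalDatum n)
    (φ : Fin p → Cn n → EReal) (z : Fin p → Cn n) (x : Cn n) : EReal :=
  sSup {v : EReal | ∃ g : Cn n → EReal,
    (NegPSHOn g D ∧
      (∀ i, NotInIdeal (fun j w => (L i).f j (w - z i)) (fun w => (L i).u (w - z i)) g
        (z i)) ∧
      ∀ i, GeO1Near g (fun w => φ i (w - z i)) (z i)) ∧ v = g x}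

/-- The single-pole datum extracted from a multipoled datum. -/
def PrioriDatum.single {n p : ℕ} (P : PrioriDatum n p) (i : Fin p) : PrioriDatum n 1 where
  z := fun _ => P.z i
  z_inj := fun a b _ => Subsingleton.elim a b
  k := fun _ => P.k i
  f := fun _ => P.f i
  u := fun _ => P.u i
  rad := fun _ => P.rad i
  rad_pos := fun _ => P.rad_pos i
  f_holo := fun _ j => P.f_holo i j
  u_psh := fun _ => P.u_psh i
  u_int := fun _ => P.u_int i

/-- `f ∈ ℰ_m(D)`: holomorphic on `D`, bounded by `1`, and belonging to the multiplier
ideal `𝓘(mΦ)` at every pole. -/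
def memE {n p : ℕ} (D : Set (Cn n)) (P : PrioriDatum n p) (Φ : Cn n → EReal) (m : ℕ)
    (f : Cn n → ℂ) : Prop :=
  DifferentiableOn ℂ f D ∧ (∀ z ∈ D, ‖f z‖ ≤ 1) ∧
    ∀ i, MemIdeal f (fun w => ((m : ℝ) : EReal) * Φ w) (P.z i)

/-- `f ∈ 𝒜²_m(D)`: holomorphic on `D`, with `∫_D |f|² ≤ 1`, and belonging to the
multiplier ideal `𝓘(mΦ)` at every pole. -/
def memA {n p : ℕ} (D : Set (Cn n)) (P : PrioriDatum n p) (Φ : Cn n → EReal) (m : ℕ)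
    (f : Cn n → ℂ) : Prop :=
  DifferentiableOn ℂ f D ∧ (∫⁻ w in D, ((‖f w‖₊ : ℝ≥0∞)) ^ 2) ≤ 1 ∧
    ∀ i, MemIdeal f (fun w => ((m : ℝ) : EReal) * Φ w) (P.z i)

/-- `φ_m(x) = sup{(1/m) log|f(x)| : f ∈ ℰ_m(D)}`. -/
noncomputable def phiSupE {n p : ℕ} (D : Set (Cn n)) (P : PrioriDatum n p)
    (Φ : Cn n → EReal) (m : ℕ) (x : Cn n) : EReal :=
  sSup {v : EReal | ∃ f : Cn n → ℂ, memE D P Φ m f ∧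
    v = ((1 / (m : ℝ) : ℝ) : EReal) * elog ‖f x‖}

/-- `ϖ_m(x) = sup{(1/m) log|f(x)| : f ∈ 𝒜²_m(D)}`. -/
noncomputable def phiSupA {n p : ℕ} (D : Set (Cn n)) (P : PrioriDatum n p)
    (Φ : Cn n → EReal) (m : ℕ) (x : Cn n) : EReal :=
  sSup {v : EReal | ∃ f : Cn n → ℂ, memA D P Φ m f ∧
    v = ((1 / (m : ℝ) : ℝ) : EReal) * elog ‖f x‖}

/-- `Φ_{D,z_i}`: the upper envelope of all negative plurisubharmonic `g` on `D` with
`(f_{0,i}, z_i) ∉ 𝓘(u_{0,i} + g)_{z_i}` and `g ≥ Φ` on `D`. -/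
noncomputable def zhouSupGe {n p : ℕ} (D : Set (Cn n)) (P : PrioriDatum n p) (i : Fin p)
    (Φ : Cn n → EReal) (x : Cn n) : EReal :=
  sSup {v : EReal | ∃ g : Cn n → EReal,
    (NegPSHOn g D ∧ NotInIdeal (P.f i) (P.u i) g (P.z i) ∧ ∀ z ∈ D, Φ z ≤ g z) ∧
    v = g x}

end

/-! Φ itself is admissible in the envelope. Conversely, for an admissible `g` the function
`max g Φ` is again negative plurisubharmonic and dominates `Φ`; near each pole it is at most
`g + O(1)`, so `|f_{0,i}|² e^{-2u_{0,i}-2 max g Φ}` is still not integrable. The maximality of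
the global Zhou weight then forces `max g Φ = Φ`, i.e. `g ≤ Φ`. -/

section Sup

variable {F : Type*} [NormedAddCommGroup F]

theorem GeO1Near.refl (f : F → EReal) (z₀ : F) : GeO1Near f f z₀ :=
  ⟨1, one_pos, 0, fun w _ => by simp⟩

theorem GeO1Near.sup_self {f g : F → EReal} {z₀ : F} (h : GeO1Near f g z₀) :
    GeO1Near f (fun w => f w ⊔ g w) z₀ := by
  obtain ⟨r, hr, C, hC⟩ := h
  refine ⟨r, hr, max C 0, fun w hw => sup_le ?_ ?_⟩
  · exact le_add_of_nonneg_right (EReal.coe_nonneg.2 (le_max_right C 0))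
  · refine (hC w hw).trans ?_
    gcongr
    exact le_max_left C 0

variable [NormedSpace ℂ F] {u v : F → EReal} {D : Set F}

theorem SubMeanOnLines.sup (hu : SubMeanOnLines u D) (hv : SubMeanOnLines v D) :
    SubMeanOnLines (fun z => u z ⊔ v z) D :=
  fun a b r hr hD h hh hbd l hl =>
    sup_le (hu a b r hr hD h hh (fun l' hl' => le_sup_left.trans (hbd l' hl')) l hl)
      (hv a b r hr hD h hh (fun l' hl' => le_sup_right.trans (hbd l' hl')) l hl)

theorem PlurisubharmonicOn.sup (hu : PlurisubharmonicOn u D) (hv : PlurisubharmonicOn v D) :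
    PlurisubharmonicOn (fun z => u z ⊔ v z) D :=
  ⟨hu.1.sup hv.1, fun z hz => sup_lt_iff.2 ⟨hu.2.1 z hz, hv.2.1 z hz⟩, hu.2.2.sup hv.2.2⟩

theorem NegPSHOn.sup (hu : NegPSHOn u D) (hv : NegPSHOn v D) :
    NegPSHOn (fun z => u z ⊔ v z) D :=
  ⟨hu.1.sup hv.1, fun z hz => sup_le (hu.2 z hz) (hv.2 z hz)⟩

end Sup

theorem expE_coe (a : ℝ) : expE a = ENNReal.ofReal (Real.exp a) := by
  simp only [expE, EReal.coe_ne_top, EReal.coe_ne_bot, if_false, EReal.toReal_coe]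

theorem expE_mono : Monotone expE := by
  intro x y h
  induction y using EReal.rec with
  | bot => rw [le_bot_iff.1 h]
  | top => simp [expE]
  | coe b =>
    induction x using EReal.rec with
    | bot => simp [expE]
    | top => exact absurd h (by simp)
    | coe a =>
      rw [expE_coe, expE_coe]
      exact ENNReal.ofReal_le_ofReal (Real.exp_le_exp.2 (EReal.coe_le_coe_iff.1 h))

theorem expE_add_coe (x : EReal) (c : ℝ) :
    expE (x + c) = expE x * ENNReal.ofReal (Real.exp c) := by
  induction x using EReal.rec with
  | bot => simp [expE]
  | top =>
    rw [EReal.top_add_of_ne_bot (EReal.coe_ne_bot c)]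
    simp [expE, ENNReal.top_mul (by positivity : ENNReal.ofReal (Real.exp c) ≠ 0)]
  | coe a =>
    rw [← EReal.coe_add, expE_coe, expE_coe, Real.exp_add,
      ENNReal.ofReal_mul (Real.exp_nonneg a)]

theorem EReal.neg_two_mul_le_of_le_add {x y : EReal} {c : ℝ} (h : x ≤ y + c) :
    -2 * y ≤ -2 * x + ((2 * c : ℝ) : EReal) := by
  have hneg : (-2 : EReal) = ((-2 : ℝ) : EReal) := by
    rw [EReal.coe_neg]
    rfl
  induction y using EReal.rec with
  | bot =>
    have hx : x = ⊥ := le_bot_iff.1 (by simpa using h)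
    rw [hx, hneg, EReal.coe_mul_bot_of_neg (by norm_num), EReal.top_add_coe]
  | top =>
    rw [hneg, EReal.coe_mul_top_of_neg (by norm_num)]
    exact bot_le
  | coe b =>
    induction x using EReal.rec with
    | bot =>
      rw [hneg, EReal.coe_mul_bot_of_neg (by norm_num), EReal.top_add_coe]
      exact le_top
    | top => exact absurd h (by simp [← EReal.coe_add])
    | coe a =>
      rw [hneg, ← EReal.coe_mul, ← EReal.coe_mul, ← EReal.coe_add, EReal.coe_le_coe_iff]
      rw [← EReal.coe_add, EReal.coe_le_coe_iff] at h
      linarith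

theorem expE_neg_two_mul_le_of_le_add {x y : EReal} {c : ℝ} (h : x ≤ y + c) :
    expE (-2 * y) ≤ expE (-2 * x) * ENNReal.ofReal (Real.exp (2 * c)) :=
  (expE_mono (EReal.neg_two_mul_le_of_le_add h)).trans_eq (expE_add_coe _ _)

theorem IntegrableNear.of_le_const_mul {n : ℕ} {g h : Cn n → ℝ≥0∞} {z₀ : Cn n} {c : ℝ≥0∞}
    (hh : IntegrableNear h z₀) (hc : c ≠ ⊤) (hle : ∀ᶠ w in 𝓝 z₀, g w ≤ c * h w) :
    IntegrableNear g z₀ := by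
  obtain ⟨r, hr, hfin⟩ := hh
  obtain ⟨ε, hε, hball⟩ := Metric.eventually_nhds_iff_ball.1 hle
  refine ⟨min r ε, lt_min hr hε, ?_⟩
  calc ∫⁻ w in ball z₀ (min r ε), g w
      ≤ ∫⁻ w in ball z₀ (min r ε), c * h w :=
        setLIntegral_mono' measurableSet_ball
          fun w hw => hball w (ball_subset_ball (min_le_right r ε) hw)
    _ = c * ∫⁻ w in ball z₀ (min r ε), h w := lintegral_const_mul' c _ hc
    _ ≤ c * ∫⁻ w in ball z₀ r, h w :=
        mul_le_mul_right (lintegral_mono_set (ball_subset_ball (min_le_left r ε))) c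
    _ < ⊤ := ENNReal.mul_lt_top hc.lt_top hfin

theorem NotInIdeal.of_geO1Near {n k : ℕ} {f : Fin k → Cn n → ℂ} {u g ψ : Cn n → EReal}
    {z₀ : Cn n} (hg : NotInIdeal f u g z₀) (hψ : GeO1Near g ψ z₀) : NotInIdeal f u ψ z₀ := by
  obtain ⟨r, hr, C, hC⟩ := hψ
  refine fun hψint => hg (hψint.of_le_const_mul (c := ENNReal.ofReal (Real.exp (2 * C)))
    ENNReal.ofReal_ne_top ?_)
  filter_upwards [Metric.ball_mem_nhds z₀ hr] with w hw
  calc densFn f u w * expE (-2 * g w)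
      ≤ densFn f u w * (expE (-2 * ψ w) * ENNReal.ofReal (Real.exp (2 * C))) := by
        gcongr
        exact expE_neg_two_mul_le_of_le_add (hC w hw)
    _ = ENNReal.ofReal (Real.exp (2 * C)) * (densFn f u w * expE (-2 * ψ w)) := by ring

theorem IsGlobalZhouWeight.le_of_notInIdeal {n p : ℕ} {G : Set (Cn n)} {P : PrioriDatum n p}
    {Φ g : Cn n → EReal} (hΦ : IsGlobalZhouWeight G P Φ) (hg : NegPSHOn g G)
    (hgP : ∀ i, NotInIdeal (P.f i) (P.u i) g (P.z i)) (hgΦ : ∀ i, GeO1Near g Φ (P.z i)) :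
    ∀ z ∈ G, g z ≤ Φ z := by
  have hsup_eq := hΦ.2.2.2 (fun w => g w ⊔ Φ w) (hg.sup hΦ.1) (fun _ _ => le_sup_right)
    (fun i => (hgP i).of_geO1Near (hgΦ i).sup_self)
  exact fun z hz => le_sup_left.trans (hsup_eq z hz).le

theorem statement3_general {n p : ℕ} (D : Set (Cn n))
    (P : PrioriDatum n p)
    (Φ : Cn n → EReal) (hΦ : IsGlobalZhouWeight D P Φ) :
    ∀ z ∈ D, Φ z = zhouSup D P (fun _ => Φ) z := by
  intro z hz
  refine le_antisymm
    (le_sSup ⟨Φ, ⟨hΦ.1, hΦ.2.2.1, fun i => GeO1Near.refl Φ (P.z i)⟩, rfl⟩) (sSup_le ?_)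
  rintro _ ⟨g, ⟨hg, hgP, hgΦ⟩, rfl⟩
  exact hΦ.le_of_notInIdeal hg hgP hgΦ z hz

/-- Corollary 1.6: a multipoled global Zhou weight coincides with the upper envelope of
all negative plurisubharmonic functions `g` with `(f_{0,i},z_i) ∉ 𝓘(u_{0,i}+g)_{z_i}`
and `g ≥ Φ + O(1)` near each pole. -/
theorem statement3 {n p : ℕ} (hp : 0 < p) (D : Set (Cn n)) (hD : IsHyperconvex D)
    (P : PrioriDatum n p) (hzD : ∀ i, P.z i ∈ D)
    (Φ : Cn n → EReal) (hΦ : IsGlobalZhouWeight D P Φ) :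
    ∀ z ∈ D, Φ z = zhouSup D P (fun _ => Φ) z :=
  statement3_general D P Φ hΦ
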